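/- arXiv:2111.04842 — 4 statements merged into one kernel-verified Lean document; each statement's English description precedes it below -/
import Mathlib

section
/- Let s > 0, m > 0, let n ≥ 1 be an integer, and let k = (k₁, k₂) ∈ 2πℤ² with −πn < k_i ≤ πn for i = 1,2. Then, with g_s(λ) = (1 − e^{−λ s})/λ − 1/(λ + 1/s) and κ = 4/π², the lattice Fourier coefficient of the covariance of X_s^h obeys the ε-uniform summable bound g_s( n² Σ_{i=1,2} (2 − 2cos(k_i/n)) + m² ) ≤ 1/( s · (κ |k|² + m²)² ), where |k|² = k₁² + k₂². -/
/-!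
Jordan's inequality `cos x ≤ 1 - 2x²/π²` on `[-π, π]` bounds the symbol of the discrete
Laplacian below by `κ|k|²` on the Brillouin zone, so `λ ≥ κ|k|² + m²`. On the other hand
`g_s(λ) ≤ 1/λ - 1/(λ + 1/s) = 1/(s λ (λ + 1/s)) ≤ 1/(s λ²)`, which decreases in `λ`.
-/

open Real

theorem four_div_pi_sq_mul_sq_le_sq_mul_two_sub_two_cos {n k : ℝ} (hn : 0 < n)
    (hk : |k| ≤ π * n) :
    4 / π ^ 2 * k ^ 2 ≤ n ^ 2 * (2 - 2 * cos (k / n)) := by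
  have hkn : |k / n| ≤ π := by
    rwa [abs_div, abs_of_pos hn, div_le_iff₀ hn]
  have hcos := cos_le_one_sub_mul_cos_sq hkn
  calc 4 / π ^ 2 * k ^ 2 = n ^ 2 * (2 * (2 / π ^ 2 * (k / n) ^ 2)) := by
        field_simp; ring
    _ ≤ n ^ 2 * (2 - 2 * cos (k / n)) := by gcongr; linarith

theorem one_sub_exp_div_sub_one_div_add_one_div_le {lam s : ℝ} (hlam : 0 < lam) (hs : 0 < s) :
    (1 - exp (-(lam * s))) / lam - 1 / (lam + 1 / s) ≤ 1 / (s * lam ^ 2) := by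
  have hexp : (1 - exp (-(lam * s))) / lam ≤ 1 / lam := by
    gcongr
    linarith [exp_pos (-(lam * s))]
  have hdiff : 1 / lam - 1 / (lam + 1 / s) = 1 / (s * (lam * (lam + 1 / s))) := by
    field_simp
    ring
  calc (1 - exp (-(lam * s))) / lam - 1 / (lam + 1 / s)
      ≤ 1 / lam - 1 / (lam + 1 / s) := by linarith
    _ = 1 / (s * (lam * (lam + 1 / s))) := hdiff
    _ ≤ 1 / (s * lam ^ 2) := by
        rw [sq]
        gcongr
        linarith [one_div_pos.mpr hs]

theorem gs_lattice_fourier_coefficient_bound_general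
    (s m : ℝ) (hs : 0 < s) (hm : 0 < m) (n : ℕ) (hn : 1 ≤ n)
    (k₁ k₂ : ℝ)
    (hb₁ : -(Real.pi * n) < k₁ ∧ k₁ ≤ Real.pi * n)
    (hb₂ : -(Real.pi * n) < k₂ ∧ k₂ ≤ Real.pi * n) :
    let lam : ℝ := (n : ℝ) ^ 2 * ((2 - 2 * Real.cos (k₁ / n)) + (2 - 2 * Real.cos (k₂ / n)))
      + m ^ 2
    (1 - Real.exp (-(lam * s))) / lam - 1 / (lam + 1 / s) ≤
      1 / (s * ((4 / Real.pi ^ 2) * (k₁ ^ 2 + k₂ ^ 2) + m ^ 2) ^ 2) := by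
  intro lam
  have hn₀ : (0 : ℝ) < n := by exact_mod_cast hn
  have h₁ := four_div_pi_sq_mul_sq_le_sq_mul_two_sub_two_cos hn₀
    (abs_le.mpr ⟨hb₁.1.le, hb₁.2⟩)
  have h₂ := four_div_pi_sq_mul_sq_le_sq_mul_two_sub_two_cos hn₀
    (abs_le.mpr ⟨hb₂.1.le, hb₂.2⟩)
  have hμ : 0 < 4 / π ^ 2 * (k₁ ^ 2 + k₂ ^ 2) + m ^ 2 := by positivity
  have hμ_le : 4 / π ^ 2 * (k₁ ^ 2 + k₂ ^ 2) + m ^ 2 ≤ lam := by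
    simp only [lam]
    linarith
  calc (1 - exp (-(lam * s))) / lam - 1 / (lam + 1 / s)
      ≤ 1 / (s * lam ^ 2) := one_sub_exp_div_sub_one_div_add_one_div_le (hμ.trans_le hμ_le) hs
    _ ≤ 1 / (s * (4 / π ^ 2 * (k₁ ^ 2 + k₂ ^ 2) + m ^ 2) ^ 2) := by gcongr

/-- For `s > 0`, `m > 0`, `n ≥ 1` and a dual-lattice frequency `k = 2πj ∈ 2πℤ²` with
`−πn < kᵢ ≤ πn`, the lattice Fourier coefficient of the covariance of `X_s^h` obeys the
`ε`-uniform summable bound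
`g_s(n² Σᵢ (2 − 2cos(kᵢ/n)) + m²) ≤ 1/(s (κ|k|² + m²)²)` with `κ = 4/π²`. -/
theorem gs_lattice_fourier_coefficient_bound
    (s m : ℝ) (hs : 0 < s) (hm : 0 < m) (n : ℕ) (hn : 1 ≤ n)
    (j₁ j₂ : ℤ) (k₁ k₂ : ℝ) (hk₁ : k₁ = 2 * Real.pi * j₁) (hk₂ : k₂ = 2 * Real.pi * j₂)
    (hb₁ : -(Real.pi * n) < k₁ ∧ k₁ ≤ Real.pi * n)
    (hb₂ : -(Real.pi * n) < k₂ ∧ k₂ ≤ Real.pi * n) :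
    let lam : ℝ := (n : ℝ) ^ 2 * ((2 - 2 * Real.cos (k₁ / n)) + (2 - 2 * Real.cos (k₂ / n)))
      + m ^ 2
    (1 - Real.exp (-(lam * s))) / lam - 1 / (lam + 1 / s) ≤
      1 / (s * ((4 / Real.pi ^ 2) * (k₁ ^ 2 + k₂ ^ 2) + m ^ 2) ^ 2) :=
  gs_lattice_fourier_coefficient_bound_general s m hs hm n hn k₁ k₂ hb₁ hb₂
end

section
/- Fix s > 0 and m > 0, and let g_s(λ) = (1 − e^{−λ s})/λ − 1/(λ + 1/s) for λ > 0. For each integer n ≥ 1 define q̂ⁿ : ℤ² → ℝ by q̂ⁿ(j) = √( g_s( n² Σ_{i=1,2} (2 − 2cos(2π j_i / n)) + m² ) ) if −n/2 < j_i ≤ n/2 for i = 1,2, and q̂ⁿ(j) = 0 otherwise; and define q̂⁰ : ℤ² → ℝ by q̂⁰(j) = √( g_s( 4π²(j₁² + j₂²) + m² ) ). Then Σ_{j ∈ ℤ²} ( q̂ⁿ(j) − q̂⁰(j) )² → 0 as n → ∞. -/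
/-!
Dominated convergence for sums over `ℤ²`. Pointwise, `n²(2 - 2cos(2πa/n)) = 4π²a² sinc(πa/n)²`
tends to `4π²a²`, the cutoff is eventually inactive and `g_s` is continuous. For the domination,
`0 ≤ g_s(λ) ≤ 1/(sλ²)`, and on the Brillouin zone Jordan's inequality bounds the lattice symbol
below by `|j|²`, so both coefficients squared are at most `1/(s(|j|² + m²)²)`, which is summable
over `ℤ²`.
-/

open Filter Topology Real

/-- The function `g_s` of the paper. -/
noncomputable def covMultiplier (s lam : ℝ) : ℝ :=
  (1 - exp (-(lam * s))) / lam - 1 / (lam + 1 / s)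

section covMultiplier

variable {s l : ℝ}

theorem covMultiplier_nonneg (hs : 0 < s) (hl : 0 < l) : 0 ≤ covMultiplier s l := by
  have hexp : exp (-(l * s)) * (l * s + 1) ≤ 1 := by
    have : exp (-(l * s)) * exp (l * s) = 1 := by rw [← exp_add]; simp
    nlinarith [add_one_le_exp (l * s), exp_pos (-(l * s))]
  rw [covMultiplier, sub_nonneg, show 1 / (l + 1 / s) = s / (l * s + 1) by field_simp,
    div_le_div_iff₀ (by positivity) hl]
  nlinarith

theorem covMultiplier_le (hs : 0 < s) (hl : 0 < l) : covMultiplier s l ≤ 1 / (s * l ^ 2) := by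
  have h₁ : (1 - exp (-(l * s))) / l ≤ 1 / l := by gcongr; linarith [exp_pos (-(l * s))]
  have h₂ : 1 / l - 1 / (l + 1 / s) ≤ 1 / (s * l ^ 2) := by
    rw [show 1 / l - 1 / (l + 1 / s) = 1 / (s * l ^ 2 + l) by field_simp; ring]
    gcongr
    linarith
  rw [covMultiplier]
  linarith

theorem continuousAt_covMultiplier (hs : 0 < s) (hl : 0 < l) :
    ContinuousAt (covMultiplier s) l := by
  unfold covMultiplier
  have hl₀ : l ≠ 0 := hl.ne'
  have hls : l + 1 / s ≠ 0 := by positivity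
  fun_prop (disch := assumption)

theorem sq_sqrt_covMultiplier_le {d : ℝ} (hs : 0 < s) (hd : 0 < d) (hdl : d ≤ l) :
    √(covMultiplier s l) ^ 2 ≤ 1 / (s * d ^ 2) := by
  have hl : 0 < l := hd.trans_le hdl
  rw [sq_sqrt (covMultiplier_nonneg hs hl)]
  exact (covMultiplier_le hs hl).trans (by gcongr)

end covMultiplier

theorem sq_mul_two_sub_two_cos_eq {x : ℝ} (hx : x ≠ 0) (a : ℝ) :
    x ^ 2 * (2 - 2 * cos (2 * π * a / x)) = 4 * π ^ 2 * a ^ 2 * sinc (π * a / x) ^ 2 := by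
  rcases eq_or_ne a 0 with rfl | ha
  · simp
  rw [sinc_of_ne_zero (by positivity), show 2 * π * a / x = 2 * (π * a / x) by ring,
    cos_two_mul', cos_sq']
  field_simp
  ring

theorem tendsto_sq_mul_two_sub_two_cos (a : ℝ) :
    Tendsto (fun n : ℕ => (n : ℝ) ^ 2 * (2 - 2 * cos (2 * π * a / n))) atTop
      (𝓝 (4 * π ^ 2 * a ^ 2)) := by
  have hsinc : Tendsto (fun n : ℕ => sinc (π * a / n)) atTop (𝓝 1) :=
    (continuous_sinc.tendsto' 0 1 sinc_zero).comp (tendsto_const_div_atTop_nhds_zero_nat (π * a))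
  have := (hsinc.pow 2).const_mul (4 * π ^ 2 * a ^ 2)
  rw [one_pow, mul_one] at this
  refine this.congr' ?_
  filter_upwards [eventually_ne_atTop 0] with n hn
  exact (sq_mul_two_sub_two_cos_eq (Nat.cast_ne_zero.2 hn) a).symm

/-- Jordan's inequality `cos θ ≤ 1 - 2θ²/π²` for `|θ| ≤ π`, at `θ = 2πa/x`. -/
theorem sixteen_mul_sq_le_sq_mul_two_sub_two_cos {a x : ℝ} (h : |a| ≤ x / 2) :
    16 * a ^ 2 ≤ x ^ 2 * (2 - 2 * cos (2 * π * a / x)) := by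
  rcases (abs_nonneg a |>.trans h).eq_or_lt with hx | hx
  · obtain rfl : a = 0 := abs_nonpos_iff.1 (by linarith)
    simp
  replace hx : 0 < x := by linarith
  have hθ : |2 * π * a / x| ≤ π := by
    rw [abs_div, abs_mul, abs_of_pos (by positivity : (0 : ℝ) < 2 * π), abs_of_pos hx,
      div_le_iff₀ hx]
    nlinarith [pi_pos]
  have hcos := cos_le_one_sub_mul_cos_sq hθ
  have : x ^ 2 * (2 / π ^ 2 * (2 * π * a / x) ^ 2) = 8 * a ^ 2 := by
    field_simp
    ring
  nlinarith [sq_nonneg x]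

theorem eventually_neg_half_lt_and_le_half (a : ℝ) :
    ∀ᶠ n : ℕ in atTop, -(n : ℝ) / 2 < a ∧ a ≤ (n : ℝ) / 2 := by
  filter_upwards [tendsto_natCast_atTop_atTop.eventually_gt_atTop (2 * |a|)] with n hn
  constructor <;> linarith [neg_abs_le a, le_abs_self a]

theorem summable_one_div_sq_add {c : ℝ} (hc : 0 < c) :
    Summable fun j : ℤ => 1 / ((j : ℝ) ^ 2 + c) := by
  refine Summable.of_norm_bounded_eventually (Real.summable_one_div_int_pow.2 one_lt_two) ?_
  filter_upwards [eventually_cofinite_ne 0] with j hj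
  have : (0 : ℝ) < (j : ℝ) ^ 2 := by positivity
  rw [Real.norm_of_nonneg (by positivity)]
  gcongr
  linarith

theorem summable_one_div_sq_add_sq_add_sq {c : ℝ} (hc : 0 < c) :
    Summable fun j : ℤ × ℤ => 1 / ((j.1 : ℝ) ^ 2 + (j.2 : ℝ) ^ 2 + c) ^ 2 := by
  have hprod := (summable_one_div_sq_add (half_pos hc)).mul_of_nonneg
    (summable_one_div_sq_add (half_pos hc)) (fun _ => by positivity) (fun _ => by positivity)
  refine hprod.of_nonneg_of_le (fun _ => by positivity) fun j => ?_
  rw [div_mul_div_comm, one_mul]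
  gcongr
  nlinarith [sq_nonneg ((j.1 : ℝ) ^ 2 - (j.2 : ℝ) ^ 2), sq_nonneg (j.1 : ℝ), sq_nonneg (j.2 : ℝ)]

theorem tendsto_tsum_sq_sub_of_tendsto {α ι : Type*} {𝓕 : Filter α} [𝓕.NeBot]
    {f : α → ι → ℝ} {f₀ b : ι → ℝ} (hb : Summable b)
    (hf : ∀ j, Tendsto (f · j) 𝓕 (𝓝 (f₀ j))) (hfb : ∀ n j, f n j ^ 2 ≤ b j) :
    Tendsto (fun n => ∑' j, (f n j - f₀ j) ^ 2) 𝓕 (𝓝 0) := by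
  have hf₀b : ∀ j, f₀ j ^ 2 ≤ b j := fun j =>
    le_of_tendsto ((hf j).pow 2) (Eventually.of_forall fun n => hfb n j)
  have hdom : ∀ n j, ‖(f n j - f₀ j) ^ 2‖ ≤ 4 * b j := fun n j => by
    rw [Real.norm_of_nonneg (sq_nonneg _)]
    nlinarith [sq_nonneg (f n j + f₀ j), hfb n j, hf₀b j]
  simpa only [tsum_zero] using tendsto_tsum_of_dominated_convergence (g := fun _ => 0)
    (hb.mul_left 4)
    (fun j => by simpa using ((hf j).sub_const (f₀ j)).pow 2) (Eventually.of_forall hdom)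

/-- ℓ² convergence of the Fourier coefficients of the square-root covariances of the
lattice fields `X_s^{h,ε}` (mesh `ε = 1/n`) to those of the continuum field `X_s^{h,0}`:
`Σ_{j ∈ ℤ²} (q̂ⁿ(j) − q̂⁰(j))² → 0` as `n → ∞`. -/
theorem fourier_sqrt_covariance_l2_convergence (s m : ℝ) (hs : 0 < s) (hm : 0 < m) :
    let g : ℝ → ℝ := fun lam => (1 - Real.exp (-(lam * s))) / lam - 1 / (lam + 1 / s)
    let qn : ℕ → ℤ × ℤ → ℝ := fun n j =>
      if (-(n : ℝ) / 2 < (j.1 : ℝ) ∧ (j.1 : ℝ) ≤ (n : ℝ) / 2) ∧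
          (-(n : ℝ) / 2 < (j.2 : ℝ) ∧ (j.2 : ℝ) ≤ (n : ℝ) / 2) then
        Real.sqrt (g ((n : ℝ) ^ 2 *
          ((2 - 2 * Real.cos (2 * Real.pi * (j.1 : ℝ) / (n : ℝ)))
            + (2 - 2 * Real.cos (2 * Real.pi * (j.2 : ℝ) / (n : ℝ)))) + m ^ 2))
      else 0
    let q0 : ℤ × ℤ → ℝ := fun j =>
      Real.sqrt (g (4 * Real.pi ^ 2 * ((j.1 : ℝ) ^ 2 + (j.2 : ℝ) ^ 2) + m ^ 2))
    Tendsto (fun n : ℕ => ∑' j : ℤ × ℤ, (qn n j - q0 j) ^ 2) atTop (nhds 0) := by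
  intro g qn q0
  set d : ℤ × ℤ → ℝ := fun j => (j.1 : ℝ) ^ 2 + (j.2 : ℝ) ^ 2 + m ^ 2
  have hd : ∀ j, 0 < d j := fun j => by positivity
  refine tendsto_tsum_sq_sub_of_tendsto (b := fun j => 1 / s * (1 / d j ^ 2))
    ((summable_one_div_sq_add_sq_add_sq (by positivity)).mul_left (1 / s)) (fun j => ?_)
    (fun n j => ?_)
  · have hlim := ((tendsto_sq_mul_two_sub_two_cos j.1).add
      (tendsto_sq_mul_two_sub_two_cos j.2)).add_const (m ^ 2)
    have hcont := continuous_sqrt.continuousAt.comp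
      (continuousAt_covMultiplier (l := 4 * π ^ 2 * ((j.1 : ℝ) ^ 2 + (j.2 : ℝ) ^ 2) + m ^ 2)
        hs (by positivity))
    refine (hcont.tendsto.comp (by convert hlim using 2; ring)).congr' ?_
    filter_upwards [(eventually_neg_half_lt_and_le_half j.1).and
      (eventually_neg_half_lt_and_le_half j.2)] with n hn
    simp only [qn, if_pos hn, Function.comp_apply, mul_add]
    rfl
  · rw [one_div_mul_one_div]
    simp only [qn]
    split_ifs with hj
    · refine sq_sqrt_covMultiplier_le hs (hd j) ?_
      have h₁ := sixteen_mul_sq_le_sq_mul_two_sub_two_cos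
        (abs_le.2 ⟨by linarith [hj.1.1], hj.1.2⟩)
      have h₂ := sixteen_mul_sq_le_sq_mul_two_sub_two_cos
        (abs_le.2 ⟨by linarith [hj.2.1], hj.2.2⟩)
      nlinarith [sq_nonneg (j.1 : ℝ), sq_nonneg (j.2 : ℝ)]
    · have := hd j
      rw [zero_pow two_ne_zero]
      positivity
end

section
/- Let A be a real symmetric positive definite N×N matrix and let s > 0. Then the matrix A^{−1}(I − exp(−sA)) − (A + s^{−1} I)^{−1} is symmetric positive definite, where exp denotes the matrix exponential. -/
/-!
By the continuous functional calculus the matrix is `g_s(A)` for the scalar function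
`g_s(λ) = λ⁻¹(1 − e^{−sλ}) − (λ + s⁻¹)⁻¹`, and `g_s(A)` is positive definite because `g_s > 0`
on the spectrum of `A`, which lies in `(0, ∞)`. With `t = sλ`, `g_s(λ) > 0` is `(1 + t) e^{−t} < 1`,
i.e. `1 + t < e^t`.
-/

-- The operator norm makes real matrices a C⋆-algebra; it induces the entrywise topology, so
-- `NormedSpace.exp` is the usual matrix exponential.
open scoped Ring MatrixOrder Matrix.Norms.L2Operator

/-- The function `g_s` of the paper. -/
noncomputable def heatResolventGap (s x : ℝ) : ℝ :=
  x⁻¹ * (1 - Real.exp (-(s * x))) - (x + s⁻¹)⁻¹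

lemma heatResolventGap_pos {s x : ℝ} (hs : 0 < s) (hx : 0 < x) : 0 < heatResolventGap s x := by
  have hexp : (s * x + 1) * Real.exp (-(s * x)) < 1 := by
    rw [Real.exp_neg, ← div_eq_mul_inv, div_lt_one (Real.exp_pos _)]
    exact Real.add_one_lt_exp (by positivity)
  have hform : heatResolventGap s x
      = (1 - (s * x + 1) * Real.exp (-(s * x))) / (x * (s * x + 1)) := by
    unfold heatResolventGap
    field_simp
    ring
  rw [hform]
  exact div_pos (sub_pos.2 hexp) (by positivity)

lemma continuousOn_heatResolventGap {s : ℝ} (hs : 0 ≤ s) :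
    ContinuousOn (heatResolventGap s) (Set.Ioi 0) :=
  ((continuousOn_inv₀.mono fun _ hx => (Set.mem_Ioi.1 hx).ne').mul (by fun_prop)).sub
    ((continuousOn_id.add continuousOn_const).inv₀ fun x hx =>
      (add_pos_of_pos_of_nonneg hx (inv_nonneg.2 hs)).ne')

section CFC

variable {A : Type*} [NormedRing A] [StarRing A] [NormedAlgebra ℝ A]
  [ContinuousFunctionalCalculus ℝ A IsSelfAdjoint]

lemma cfc_exp_const_mul (r : ℝ) {a : A} (ha : IsSelfAdjoint a) :
    cfc (fun x => Real.exp (r * x)) a = NormedSpace.exp (r • a) := by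
  rw [cfc_comp' Real.exp (r * ·) a, CFC.real_exp_eq_normedSpace_exp (cfc_predicate _ a),
    cfc_const_mul_id r a]

variable [PartialOrder A] [StarOrderedRing A] [NonnegSpectrumClass ℝ A]

lemma cfc_inv_add_const {r : ℝ} (hr : 0 < r) {a : A} (ha : 0 ≤ a) :
    cfc (fun x => (x + r)⁻¹) a = (a + algebraMap ℝ A r)⁻¹ʳ := by
  have hspec := (StarOrderedRing.nonneg_iff_spectrum_nonneg (R := ℝ) a).mp ha
  rw [cfc_inv (· + r) a fun x hx => (add_pos_of_nonneg_of_pos (hspec x hx) hr).ne',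
    cfc_add_const r (fun x => x) a, cfc_id' ℝ a]

lemma cfc_heatResolventGap {a : A} (ha : IsStrictlyPositive a) {s : ℝ} (hs : 0 < s) :
    cfc (heatResolventGap s) a
      = a⁻¹ʳ * (1 - NormedSpace.exp (-(s • a))) - (a + s⁻¹ • 1)⁻¹ʳ := by
  have hspec := (StarOrderedRing.isStrictlyPositive_iff_spectrum_pos (R := ℝ) a).mp ha
  have hinv : ContinuousOn (fun x : ℝ => x⁻¹) (spectrum ℝ a) :=
    continuousOn_inv₀.mono fun x hx => (hspec x hx).ne'
  have hshift : ContinuousOn (fun x : ℝ => (x + s⁻¹)⁻¹) (spectrum ℝ a) :=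
    ContinuousOn.inv₀ (by fun_prop) fun x hx => (add_pos (hspec x hx) (inv_pos.2 hs)).ne'
  unfold heatResolventGap
  rw [← cfc_ringInverse_id (R := ℝ) a ha.isUnit, ← neg_smul,
    ← cfc_exp_const_mul _ ha.nonneg.isSelfAdjoint, ← Algebra.algebraMap_eq_smul_one,
    ← cfc_inv_add_const (inv_pos.2 hs) ha.nonneg, ← cfc_one ℝ a, ← cfc_sub .., ← cfc_mul ..,
    ← cfc_sub ..]
  simp only [neg_mul, Pi.one_apply]

lemma isStrictlyPositive_cfc_heatResolventGap {a : A} (ha : IsStrictlyPositive a) {s : ℝ}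
    (hs : 0 < s) : IsStrictlyPositive (cfc (heatResolventGap s) a) := by
  have hspec := (StarOrderedRing.isStrictlyPositive_iff_spectrum_pos (R := ℝ) a).mp ha
  have hcont := (continuousOn_heatResolventGap hs.le).mono fun x hx => Set.mem_Ioi.2 (hspec x hx)
  exact (cfc_isStrictlyPositive_iff _ a hcont ha.nonneg.isSelfAdjoint).2
    fun x hx => heatResolventGap_pos hs (hspec x hx)

end CFC

theorem gs_matrix_posDef_general
    (N : ℕ) (A : Matrix (Fin N) (Fin N) ℝ) (hApos : A.PosDef)
    (s : ℝ) (hs : 0 < s) :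
    (A⁻¹ * (1 - NormedSpace.exp (-(s • A))) - (A + s⁻¹ • (1 : Matrix (Fin N) (Fin N) ℝ))⁻¹).IsSymm ∧
    (A⁻¹ * (1 - NormedSpace.exp (-(s • A))) - (A + s⁻¹ • (1 : Matrix (Fin N) (Fin N) ℝ))⁻¹).PosDef := by
  have hpos := Matrix.isStrictlyPositive_iff_posDef.1
    (isStrictlyPositive_cfc_heatResolventGap hApos.isStrictlyPositive hs)
  rw [cfc_heatResolventGap hApos.isStrictlyPositive hs] at hpos
  simp only [Matrix.nonsing_inv_eq_ringInverse]
  exact ⟨Matrix.isHermitian_iff_isSymm.1 hpos.isHermitian, hpos⟩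

/-- For a real symmetric positive definite `N×N` matrix `A` and `s > 0`, the matrix
`A⁻¹(I − exp(−sA)) − (A + s⁻¹ I)⁻¹` is symmetric positive definite. -/
theorem gs_matrix_posDef
    (N : ℕ) (A : Matrix (Fin N) (Fin N) ℝ) (hA : A.IsSymm) (hApos : A.PosDef)
    (s : ℝ) (hs : 0 < s) :
    (A⁻¹ * (1 - NormedSpace.exp (-(s • A))) - (A + s⁻¹ • (1 : Matrix (Fin N) (Fin N) ℝ))⁻¹).IsSymm ∧
    (A⁻¹ * (1 - NormedSpace.exp (-(s • A))) - (A + s⁻¹ • (1 : Matrix (Fin N) (Fin N) ℝ))⁻¹).PosDef :=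
  gs_matrix_posDef_general N A hApos s hs
end

section
/- Let (S, d) be a metric space, let f, g : S → ℝ and set h = f − g. Let ρ > 0, R > 0 with 2ρ < R, let m, λ ∈ ℝ, and let x, y ∈ S. Assume: (i) for all u, v ∈ S, if g(u) ≥ m − λ and g(v) ≥ m − λ then d(u,v) ≤ ρ/2 or d(u,v) ≥ R; (ii) y lies in the closed ball of radius 2ρ around x and g(z) ≤ g(y) for every z in that ball; (iii) f(z) ≤ f(x) for every z in the closed ball of radius ρ around x; (iv) g(x) ≥ m − λ. Then: d(x, y) ≤ ρ/2; g(z) ≤ g(y) for every z in the closed ball of radius ρ around y; and 0 ≤ f(x) − f(y) ≤ h(x) − h(y). -/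
open Metric

theorem local_maxima_correspondence_general
    {S : Type*} [MetricSpace S] (f g h : S → ℝ) (hh : h = f - g)
    (ρ R : ℝ) (hρR : 2 * ρ < R)
    (m lam : ℝ) (x y : S)
    (hsep : ∀ u v : S, m - lam ≤ g u → m - lam ≤ g v →
      dist u v ≤ ρ / 2 ∨ R ≤ dist u v)
    (hy_mem : y ∈ Metric.closedBall x (2 * ρ))
    (hy_max : ∀ z ∈ Metric.closedBall x (2 * ρ), g z ≤ g y)
    (hx_max : ∀ z ∈ Metric.closedBall x ρ, f z ≤ f x)
    (hgx : m - lam ≤ g x) :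
    dist x y ≤ ρ / 2 ∧
    (∀ z ∈ Metric.closedBall y ρ, g z ≤ g y) ∧
    (0 ≤ f x - f y ∧ f x - f y ≤ h x - h y) := by
  have hyx : dist y x ≤ 2 * ρ := mem_closedBall.mp hy_mem
  have hρ : 0 ≤ ρ := by linarith [dist_nonneg.trans hyx]
  have hgxy : g x ≤ g y := hy_max x (mem_closedBall_self (by linarith))
  have hxy : dist x y ≤ ρ / 2 :=
    (hsep x y hgx (hgx.trans hgxy)).resolve_right (by rw [dist_comm]; linarith)
  have hfyx : f y ≤ f x := hx_max y (mem_closedBall'.mpr (by linarith))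
  refine ⟨hxy, fun z hz ↦ hy_max z (closedBall_subset_closedBall' ?_ hz), ?_⟩
  · linarith [dist_comm x y]
  · simp only [hh, Pi.sub_apply]
    constructor <;> linarith

/-- Deterministic core of the correspondence between local maxima of `f = g + h` and of
`g`: under the near-maxima separation hypothesis for `g`, if `y` maximises `g` on the ball
of radius `2ρ` around `x`, `x` is a `ρ`-local maximum of `f`, and `g(x) ≥ m − λ`, then
`d(x,y) ≤ ρ/2`, `y` is a `ρ`-local maximum of `g`, and `0 ≤ f(x) − f(y) ≤ h(x) − h(y)`. -/
theorem local_maxima_correspondence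
    {S : Type*} [MetricSpace S] (f g h : S → ℝ) (hh : h = f - g)
    (ρ R : ℝ) (hρ : 0 < ρ) (hR : 0 < R) (hρR : 2 * ρ < R)
    (m lam : ℝ) (x y : S)
    (hsep : ∀ u v : S, m - lam ≤ g u → m - lam ≤ g v →
      dist u v ≤ ρ / 2 ∨ R ≤ dist u v)
    (hy_mem : y ∈ Metric.closedBall x (2 * ρ))
    (hy_max : ∀ z ∈ Metric.closedBall x (2 * ρ), g z ≤ g y)
    (hx_max : ∀ z ∈ Metric.closedBall x ρ, f z ≤ f x)
    (hgx : m - lam ≤ g x) :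
    dist x y ≤ ρ / 2 ∧
    (∀ z ∈ Metric.closedBall y ρ, g z ≤ g y) ∧
    (0 ≤ f x - f y ∧ f x - f y ≤ h x - h y) :=
  local_maxima_correspondence_general f g h hh ρ R hρR m lam x y hsep hy_mem hy_max hx_max hgx
end
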